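/- In the call-by-value probabilistic λ-calculus Λ⊕^cbv, the lifted probabilistic choice reduction ⇒⊕ satisfies the diamond property: if 𝔪 ⇒⊕ 𝔫 and 𝔪 ⇒⊕ 𝔰, then there exists 𝔯 with 𝔫 ⇒⊕ 𝔯 and 𝔰 ⇒⊕ 𝔯. -/

import Mathlib

open scoped NNReal ENNReal

/-- A (raw) multidistribution on `X`: a finite multiset of weighted elements. -/
abbrev MDist (X : Type) := Multiset (ℝ≥0 × X)

namespace MDist

/-- Scalar multiplication of a multidistribution. -/
def scale {X : Type} (p : ℝ≥0) (m : MDist X) : MDist X :=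
  m.map fun q => (p * q.1, q.2)

/-- The singleton multidistribution `[1 M]`. -/
def single {X : Type} (M : X) : MDist X := {(1, M)}

/-- A multidistribution is proper when every weight lies in `(0,1]` and the
weights sum to at most `1`. -/
def Proper {X : Type} (m : MDist X) : Prop :=
  (∀ q ∈ m, 0 < q.1 ∧ q.1 ≤ 1) ∧ (m.map Prod.fst).sum ≤ 1

/-- The probability that the distribution associated to a multidistribution
assigns to an event `A`. -/
noncomputable def mass {X : Type} (m : MDist X) (A : Set X) : ℝ≥0∞ :=
  (m.map fun q => A.indicator (fun _ => (q.1 : ℝ≥0∞)) q.2).sum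

end MDist

/-- One component of the lifting: either keep the term or perform a step. -/
def LiftTerm {X : Type} (r : X → MDist X → Prop) (M : X) (m : MDist X) : Prop :=
  m = MDist.single M ∨ r M m

/-- The lifting of a relation `r ⊆ X × MDist X` to a binary relation on
multidistributions. -/
inductive Lift {X : Type} (r : X → MDist X → Prop) : MDist X → MDist X → Prop
  | nil : Lift r 0 0
  | cons {p : ℝ≥0} {M : X} {m s t : MDist X} :
      LiftTerm r M m → Lift r s t → Lift r ((p, M) ::ₘ s) (MDist.scale p m + t)
/-- Terms of `Λ⊕` (de Bruijn representation). -/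
inductive Term : Type
  | var : ℕ → Term
  | lam : Term → Term
  | app : Term → Term → Term
  | choice : Term → Term → Term
deriving DecidableEq

namespace Term

/-- Shifting of de Bruijn indices above a cutoff. -/
def liftAux (c : ℕ) : Term → Term
  | var k => if k < c then var k else var (k + 1)
  | lam M => lam (liftAux (c + 1) M)
  | app M N => app (liftAux c M) (liftAux c N)
  | choice M N => choice (liftAux c M) (liftAux c N)

/-- Capture-avoiding substitution `M[N/j]`. -/
def subst : Term → ℕ → Term → Term
  | var k, j, N => if k = j then N else if j < k then var (k - 1) else var k
  | lam M, j, N => lam (subst M (j + 1) (liftAux 0 N))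
  | app M P, j, N => app (subst M j N) (subst P j N)
  | choice M P, j, N => choice (subst M j N) (subst P j N)

/-- Values: variables and abstractions. -/
inductive IsValue : Term → Prop
  | var (n : ℕ) : IsValue (var n)
  | lam (M : Term) : IsValue (lam M)

/-- `β_v`-reduction, closed under arbitrary contexts. -/
inductive BetaStep : Term → Term → Prop
  | beta {M V : Term} : IsValue V → BetaStep (app (lam M) V) (subst M 0 V)
  | appL {M M' N : Term} : BetaStep M M' → BetaStep (app M N) (app M' N)
  | appR {M N N' : Term} : BetaStep N N' → BetaStep (app M N) (app M N')
  | lam {M M' : Term} : BetaStep M M' → BetaStep (lam M) (lam M')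
  | chL {M M' N : Term} : BetaStep M M' → BetaStep (choice M N) (choice M' N)
  | chR {M N N' : Term} : BetaStep N N' → BetaStep (choice M N) (choice M N')

/-- Surface `β_v`-reduction: closure under surface contexts `S ::= □ | MS | SM`. -/
inductive SurfBetaStep : Term → Term → Prop
  | beta {M V : Term} : IsValue V → SurfBetaStep (app (lam M) V) (subst M 0 V)
  | appL {M M' N : Term} : SurfBetaStep M M' → SurfBetaStep (app M N) (app M' N)
  | appR {M N N' : Term} : SurfBetaStep N N' → SurfBetaStep (app M N) (app M N')

/-- `PlusStep M A B` holds when `M = S(P ⊕ Q)`, `A = S(P)`, `B = S(Q)` for a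
surface context `S ::= □ | MS | SM`. -/
inductive PlusStep : Term → Term → Term → Prop
  | choice {M N : Term} : PlusStep (choice M N) M N
  | appL {M A B N : Term} : PlusStep M A B → PlusStep (app M N) (app A N) (app B N)
  | appR {M N A B : Term} : PlusStep N A B → PlusStep (app M N) (app M A) (app M B)

end Term

open Term

/-- The reduction `→_{β_v} ⊆ Λ⊕ × MDST(Λ⊕)`. -/
def betaRed (M : Term) (m : MDist Term) : Prop :=
  ∃ N, BetaStep M N ∧ m = MDist.single N

/-- The probabilistic reduction `→_⊕ ⊆ Λ⊕ × MDST(Λ⊕)`. -/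
def plusRed (M : Term) (m : MDist Term) : Prop :=
  ∃ A B, PlusStep M A B ∧ m = {((1 : ℝ≥0) / 2, A), ((1 : ℝ≥0) / 2, B)}

/-- The full reduction `→ = →_{β_v} ∪ →_⊕`. -/
def red (M : Term) (m : MDist Term) : Prop := betaRed M m ∨ plusRed M m

/-- Surface reduction `→ₛ`: β_v and ⊕ rules closed under surface contexts. -/
def surfRed (M : Term) (m : MDist Term) : Prop :=
  (∃ N, SurfBetaStep M N ∧ m = MDist.single N) ∨ plusRed M m

/-- A step is deep when it is not a surface step. -/
def deepRed (M : Term) (m : MDist Term) : Prop := red M m ∧ ¬ surfRed M m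

/-!
Two `⊕`-steps from the same term either coincide or fire at disjoint positions of a
surface context, so each can still be fired after the other, and the two resulting
four-point multidistributions agree up to order. `Lift` is reflexive, compatible with
scaling and sums, and can be inverted one component at a time, so this diamond on single
terms extends componentwise to multidistributions; the reflexive case of `LiftTerm`
absorbs the components where only one side steps.
-/

namespace MDist

variable {X : Type}

@[simp]
lemma scale_cons (p q : ℝ≥0) (M : X) (m : MDist X) :
    scale p ((q, M) ::ₘ m) = (p * q, M) ::ₘ scale p m := Multiset.map_cons _ _ _

@[simp]
lemma scale_singleton (p q : ℝ≥0) (M : X) : scale p {(q, M)} = {(p * q, M)} := rfl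

@[simp]
lemma scale_add (p : ℝ≥0) (m n : MDist X) :
    scale p (m + n) = scale p m + scale p n := Multiset.map_add _ _ _

@[simp]
lemma scale_scale (p q : ℝ≥0) (m : MDist X) : scale p (scale q m) = scale (p * q) m := by
  simp [scale, mul_assoc]

@[simp]
lemma one_scale (m : MDist X) : scale 1 m = m := by
  simp [scale]

end MDist

namespace Lift

variable {X : Type} {r : X → MDist X → Prop}

lemma refl (m : MDist X) : Lift r m m := by
  induction m using Multiset.induction with
  | empty => exact nil
  | cons a s ih => simpa [MDist.single] using cons (p := a.1) (M := a.2) (Or.inl rfl) ih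

lemma eq_zero_of_zero_left {n : MDist X} (h : Lift r 0 n) : n = 0 := by
  generalize hm : (0 : MDist X) = m at h
  cases h with
  | nil => rfl
  | cons _ _ => simp at hm

lemma exists_of_cons_left {p : ℝ≥0} {M : X} {s n : MDist X} (h : Lift r ((p, M) ::ₘ s) n) :
    ∃ m t, LiftTerm r M m ∧ Lift r s t ∧ n = MDist.scale p m + t := by
  generalize hm : (p, M) ::ₘ s = m' at h
  induction h generalizing s with
  | nil => simp at hm
  | @cons q N m₀ s₀ t₀ hN hs ih =>
    rcases Multiset.cons_eq_cons.mp hm with ⟨heq, rfl⟩ | ⟨-, s₁, rfl, rfl⟩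
    · obtain ⟨rfl, rfl⟩ := Prod.mk.inj heq
      exact ⟨m₀, t₀, hN, hs, rfl⟩
    · obtain ⟨m, t, hM, ht, rfl⟩ := ih rfl
      exact ⟨m, MDist.scale q m₀ + t, hM, cons hN ht, add_left_comm _ _ _⟩

lemma add {a b c d : MDist X} (hab : Lift r a b) (hcd : Lift r c d) : Lift r (a + c) (b + d) := by
  induction hab with
  | nil => simpa using hcd
  | cons hM _ ih => simpa [add_assoc] using cons hM ih

lemma scale (p : ℝ≥0) {a b : MDist X} (h : Lift r a b) :
    Lift r (MDist.scale p a) (MDist.scale p b) := by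
  induction h with
  | nil => exact nil
  | cons hM _ ih => simpa using cons (p := p * _) hM ih

lemma single {M : X} {m : MDist X} (h : LiftTerm r M m) : Lift r (MDist.single M) m := by
  simpa [MDist.single] using cons (p := 1) h nil

lemma pair {p q : ℝ≥0} {A B : X} {a b : MDist X} (hA : LiftTerm r A a) (hB : LiftTerm r B b) :
    Lift r {(p, A), (q, B)} (MDist.scale p a + MDist.scale q b) := by
  simpa using cons (p := p) hA (cons (p := q) hB nil)

theorem diamond (hr : ∀ M m₁ m₂, r M m₁ → r M m₂ → ∃ k, Lift r m₁ k ∧ Lift r m₂ k)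
    {m n s : MDist X} (hn : Lift r m n) (hs : Lift r m s) : ∃ t, Lift r n t ∧ Lift r s t := by
  induction m using Multiset.induction generalizing n s with
  | empty =>
    rw [hn.eq_zero_of_zero_left, hs.eq_zero_of_zero_left]
    exact ⟨0, nil, nil⟩
  | cons a m ih =>
    obtain ⟨n₀, n', hn₀, hn', rfl⟩ := hn.exists_of_cons_left
    obtain ⟨s₀, s', hs₀, hs', rfl⟩ := hs.exists_of_cons_left
    obtain ⟨k, hnk, hsk⟩ : ∃ k, Lift r n₀ k ∧ Lift r s₀ k := by
      rcases hn₀ with rfl | hn₀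
      · exact ⟨s₀, single hs₀, refl s₀⟩
      rcases hs₀ with rfl | hs₀
      · exact ⟨n₀, refl n₀, single (Or.inr hn₀)⟩
      exact hr _ _ _ hn₀ hs₀
    obtain ⟨t, hnt, hst⟩ := ih hn' hs'
    exact ⟨MDist.scale a.1 k + t, (hnk.scale a.1).add hnt, (hsk.scale a.1).add hst⟩

end Lift

theorem Term.PlusStep.diamond {M A B C D : Term} (h₁ : PlusStep M A B) (h₂ : PlusStep M C D) :
    (A = C ∧ B = D) ∨
      ∃ AC AD BC BD, PlusStep A AC AD ∧ PlusStep B BC BD ∧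
        PlusStep C AC BC ∧ PlusStep D AD BD := by
  induction h₁ generalizing C D with
  | choice =>
    cases h₂
    exact Or.inl ⟨rfl, rfl⟩
  | appL h ih =>
    cases h₂ with
    | appL h' =>
      rcases ih h' with ⟨rfl, rfl⟩ | ⟨_, _, _, _, hA, hB, hC, hD⟩
      · exact Or.inl ⟨rfl, rfl⟩
      · exact Or.inr ⟨_, _, _, _, hA.appL, hB.appL, hC.appL, hD.appL⟩
    | appR h' => exact Or.inr ⟨_, _, _, _, h'.appR, h'.appR, h.appL, h.appL⟩
  | appR h ih =>
    cases h₂ with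
    | appL h' => exact Or.inr ⟨_, _, _, _, h'.appL, h'.appL, h.appR, h.appR⟩
    | appR h' =>
      rcases ih h' with ⟨rfl, rfl⟩ | ⟨_, _, _, _, hA, hB, hC, hD⟩
      · exact Or.inl ⟨rfl, rfl⟩
      · exact Or.inr ⟨_, _, _, _, hA.appR, hB.appR, hC.appR, hD.appR⟩

theorem plusRed_diamond {M : Term} {m₁ m₂ : MDist Term} (h₁ : plusRed M m₁) (h₂ : plusRed M m₂) :
    ∃ k, Lift plusRed m₁ k ∧ Lift plusRed m₂ k := by
  obtain ⟨A, B, hAB, rfl⟩ := h₁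
  obtain ⟨C, D, hCD, rfl⟩ := h₂
  rcases hAB.diamond hCD with ⟨rfl, rfl⟩ | ⟨AC, AD, BC, BD, hA, hB, hC, hD⟩
  · exact ⟨_, Lift.refl _, Lift.refl _⟩
  · have step {P Q R : Term} (h : PlusStep P Q R) : LiftTerm plusRed P {(1 / 2, Q), (1 / 2, R)} :=
      Or.inr ⟨Q, R, h, rfl⟩
    refine ⟨_, Lift.pair (step hA) (step hB), ?_⟩
    convert Lift.pair (step hC) (step hD) using 1
    simp [Multiset.singleton_add, Multiset.cons_swap]

/-- In `Λ⊕^cbv`, the lifted probabilistic reduction `⇒⊕` is diamond. -/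
theorem lift_plus_diamond :
    ∀ m n s : MDist Term, Lift plusRed m n → Lift plusRed m s →
      ∃ r, Lift plusRed n r ∧ Lift plusRed s r := by
  intro m n s hn hs
  exact Lift.diamond (fun _ _ _ => plusRed_diamond) hn hs
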